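/- arXiv:2502.16354 — 6 statements merged into one kernel-verified Lean document; each statement's English description precedes it below -/
import Mathlib

section
/- Let (X, τ) be a topological space with no isolated points (i.e., no singleton {x} is τ-open), let I be an index set, and let M_i ⊆ X for each i ∈ I. If τ = ⋂_{i∈I} τ(M_i) (a subset of X is τ-open iff it is τ(M_i)-open for every i), then X = ⋃_{i∈I} M_i. -/
/-- The Bing–Hanner extension `τ(M)` of a topology `τ` on `X` determined by a subset `M ⊆ X`:
its open sets are exactly the sets of the form `U ∪ K` with `U` a `τ`-open set and
`K ⊆ X \ M`. -/
def bingHanner {X : Type*} (τ : TopologicalSpace X) (M : Set X) : TopologicalSpace X where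
  IsOpen O := ∃ U K : Set X, τ.IsOpen U ∧ K ⊆ Mᶜ ∧ O = U ∪ K
  isOpen_univ := ⟨Set.univ, ∅, τ.isOpen_univ, by simp, by simp⟩
  isOpen_inter := by
    rintro s t ⟨U₁, K₁, hU₁, hK₁, rfl⟩ ⟨U₂, K₂, hU₂, hK₂, rfl⟩
    refine ⟨U₁ ∩ U₂, ((U₁ ∪ K₁) ∩ (U₂ ∪ K₂)) \ (U₁ ∩ U₂),
      τ.isOpen_inter _ _ hU₁ hU₂, ?_, ?_⟩
    · rintro x ⟨⟨h1, h2⟩, hn⟩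
      rcases h1 with h1 | h1
      · rcases h2 with h2 | h2
        · exact absurd ⟨h1, h2⟩ hn
        · exact hK₂ h2
      · exact hK₁ h1
    · have hsub : U₁ ∩ U₂ ⊆ (U₁ ∪ K₁) ∩ (U₂ ∪ K₂) :=
        fun x hx => ⟨Or.inl hx.1, Or.inl hx.2⟩
      exact (Set.union_diff_cancel hsub).symm
  isOpen_sUnion := by
    intro S hS
    choose U K hU hK hEq using hS
    refine ⟨⋃ s, ⋃ h : s ∈ S, U s h, ⋃ s, ⋃ h : s ∈ S, K s h, ?_, ?_, ?_⟩
    · letI := τ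
      exact isOpen_iUnion fun s => isOpen_iUnion fun h => hU s h
    · exact Set.iUnion_subset fun s => Set.iUnion_subset fun h => hK s h
    · ext x
      simp only [Set.mem_sUnion, Set.mem_union, Set.mem_iUnion]
      constructor
      · rintro ⟨s, hs, hx⟩
        rw [hEq s hs] at hx
        rcases hx with hx | hx
        · exact Or.inl ⟨s, hs, hx⟩
        · exact Or.inr ⟨s, hs, hx⟩
      · rintro (⟨s, hs, hx⟩ | ⟨s, hs, hx⟩)
        · exact ⟨s, hs, by rw [hEq s hs]; exact Or.inl hx⟩
        · exact ⟨s, hs, by rw [hEq s hs]; exact Or.inr hx⟩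

/-- `covDimLE t n` : the covering dimension of `(X, t)` is at most `n`, i.e. every finite
open cover admits a finite open refinement covering `X` in which any `n + 2` pairwise
distinct members have empty intersection. -/
def covDimLE {X : Type*} (t : TopologicalSpace X) (n : ℕ) : Prop :=
  ∀ C : Set (Set X), C.Finite → (∀ U ∈ C, t.IsOpen U) → ⋃₀ C = Set.univ →
    ∃ V : Set (Set X), V.Finite ∧ (∀ U ∈ V, t.IsOpen U) ∧ ⋃₀ V = Set.univ ∧
      (∀ U ∈ V, ∃ W ∈ C, U ⊆ W) ∧
      ∀ F : Finset (Set X), ↑F ⊆ V → F.card = n + 2 → ⋂₀ (F : Set (Set X)) = ∅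

/-- `IndLE0 t` : the large inductive dimension of `(Z, t)` is at most `0`, i.e. any two
disjoint closed sets are separated by a clopen set. -/
def IndLE0 {Z : Type*} (t : TopologicalSpace Z) : Prop :=
  ∀ A B : Set Z, @IsClosed Z t A → @IsClosed Z t B → Disjoint A B →
    ∃ U : Set Z, t.IsOpen U ∧ @IsClosed Z t U ∧ A ⊆ U ∧ U ∩ B = ∅

/-- `indLE0 t` : the small inductive dimension of `(Z, t)` is at most `0`, i.e. every point
has a neighborhood basis of clopen sets. -/
def indLE0 {Z : Type*} (t : TopologicalSpace Z) : Prop :=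
  ∀ (x : Z) (O : Set Z), t.IsOpen O → x ∈ O →
    ∃ U : Set Z, t.IsOpen U ∧ @IsClosed Z t U ∧ x ∈ U ∧ U ⊆ O

/-- `L` is a partition between `A` and `B` in `(X, t)`. -/
def isPartitionBetween {X : Type*} (t : TopologicalSpace X) (A B L : Set X) : Prop :=
  ∃ U V : Set X, t.IsOpen U ∧ t.IsOpen V ∧ Disjoint U V ∧ A ⊆ U ∧ B ⊆ V ∧ L = (U ∪ V)ᶜ

theorem bingHanner_isOpen_of_subset_compl {X : Type*} (τ : TopologicalSpace X) {M K : Set X}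
    (hK : K ⊆ Mᶜ) : (bingHanner τ M).IsOpen K :=
  ⟨∅, K, @isOpen_empty X τ, hK, (Set.empty_union K).symm⟩

/-- If `(X, τ)` has no isolated points and `τ = ⋂_{i ∈ I} τ(M_i)`
(a set is `τ`-open iff it is `τ(M_i)`-open for every `i`), then `X = ⋃_{i ∈ I} M_i`. -/
theorem cover_of_intersection_of_bingHanner {X : Type*} (τ : TopologicalSpace X)
    (hnoiso : ∀ x : X, ¬ τ.IsOpen {x}) {I : Type*} (M : I → Set X)
    (hint : ∀ O : Set X, τ.IsOpen O ↔ ∀ i, (bingHanner τ (M i)).IsOpen O) :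
    (⋃ i, M i) = Set.univ := by
  refine Set.eq_univ_of_forall fun x => ?_
  by_contra hx
  simp only [Set.mem_iUnion, not_exists] at hx
  -- a point outside every `M i` is isolated in each `τ(M i)`, hence in `τ`
  exact hnoiso x <| (hint {x}).2 fun i =>
    bingHanner_isOpen_of_subset_compl τ (Set.singleton_subset_iff.2 (hx i))
end

section
/- Let X be a hereditarily normal T1 space and let M ⊆ X be a subspace with Ind M ≤ 0, i.e., every pair of disjoint relatively closed subsets of M can be separated by a relatively clopen subset of M. Then for every pair of disjoint closed subsets A and B of X there exists a partition L between A and B in X such that L ∩ M = ∅. -/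
/-- If `X` is hereditarily normal `T₁` and `M ⊆ X` satisfies `Ind M ≤ 0`,
then any two disjoint closed subsets `A, B` of `X` admit a partition `L` between them
with `L ∩ M = ∅`. -/
theorem partition_avoiding_IndZero_subspace {X : Type*} (τ : TopologicalSpace X)
    (hT5 : @T5Space X τ) (M : Set X)
    (hM : IndLE0 (TopologicalSpace.induced (Subtype.val : M → X) τ))
    (A B : Set X) (hA : @IsClosed X τ A) (hB : @IsClosed X τ B) (hAB : Disjoint A B) :
    ∃ L : Set X, isPartitionBetween τ A B L ∧ L ∩ M = ∅ := by
  letI := τ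
  haveI := hT5
  -- Step 1: open sets with disjoint closures around A and B
  obtain ⟨U', V', hU', hV', hAU', hBV', hUV'⟩ := normal_separation hA hB hAB
  obtain ⟨U₀, hU₀, hAU₀, hclU₀⟩ :=
    normal_exists_closure_subset hA hU' hAU'
  obtain ⟨V₀, hV₀, hBV₀, hclV₀⟩ :=
    normal_exists_closure_subset hB hV' hBV'
  have hclUV : Disjoint (closure U₀) (closure V₀) :=
    hUV'.mono hclU₀ hclV₀
  -- Step 2: apply IndLE0 in the subspace M
  have hA₁ : IsClosed ((Subtype.val : M → X) ⁻¹' closure U₀) :=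
    isClosed_closure.preimage continuous_subtype_val
  have hB₁ : IsClosed ((Subtype.val : M → X) ⁻¹' closure V₀) :=
    isClosed_closure.preimage continuous_subtype_val
  obtain ⟨Ehat, hEhatopen, hEhatclosed, hEhatA, hEhatB⟩ := hM _ _ hA₁ hB₁
    (hclUV.preimage _)
  set E : Set X := Subtype.val '' Ehat with hE
  set F : Set X := M \ E with hF
  have hEM : E ⊆ M := by rintro x ⟨y, hy, rfl⟩; exact y.2
  have hMEF : M ⊆ E ∪ F := fun x hx => by
    by_cases h : x ∈ E
    · exact Or.inl h
    · exact Or.inr ⟨hx, h⟩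
  -- E is closed in M : closure E ∩ M ⊆ E
  obtain ⟨C, hC, hCE⟩ := isClosed_induced_iff.mp hEhatclosed
  obtain ⟨G, hG, hGE⟩ := isOpen_induced_iff.mp hEhatopen
  have hEMC : E = M ∩ C := by
    ext x; constructor
    · rintro ⟨y, hy, rfl⟩
      refine ⟨y.2, ?_⟩
      rw [← hCE] at hy; exact hy
    · rintro ⟨hxM, hxC⟩
      exact ⟨⟨x, hxM⟩, by rw [← hCE]; exact hxC, rfl⟩
  have hEMG : E = M ∩ G := by
    ext x; constructor
    · rintro ⟨y, hy, rfl⟩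
      refine ⟨y.2, ?_⟩
      rw [← hGE] at hy; exact hy
    · rintro ⟨hxM, hxG⟩
      exact ⟨⟨x, hxM⟩, by rw [← hGE]; exact hxG, rfl⟩
  have hclEM : closure E ∩ M ⊆ E := by
    intro x ⟨hx, hxM⟩
    rw [hEMC]
    refine ⟨hxM, ?_⟩
    have : closure E ⊆ C := closure_minimal (by rw [hEMC]; exact Set.inter_subset_right) hC
    exact this hx
  have hclFM : closure F ∩ M ⊆ F := by
    intro x ⟨hx, hxM⟩
    have hFG : F ⊆ Gᶜ := by
      rintro y ⟨hyM, hyE⟩ hyG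
      exact hyE (by rw [hEMG]; exact ⟨hyM, hyG⟩)
    have : closure F ⊆ Gᶜ := closure_minimal hFG (isClosed_compl_iff.mpr hG)
    refine ⟨hxM, fun hxE => ?_⟩
    rw [hEMG] at hxE
    exact this hx hxE.2
  -- key inclusions
  have hMU₀E : M ∩ closure U₀ ⊆ E := by
    rintro x ⟨hxM, hxU⟩
    exact ⟨⟨x, hxM⟩, hEhatA hxU, rfl⟩
  have hEclV₀ : E ∩ closure V₀ = ∅ := by
    ext x; simp only [Set.mem_empty_iff_false, iff_false]
    rintro ⟨hxE, hxV⟩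
    obtain ⟨y, hy, rfl⟩ := hxE
    have : (y : X) ∈ (∅ : Set X) := by
      have := hEhatB ▸ (Set.mem_inter hy (show y ∈ _ ⁻¹' closure V₀ from hxV))
      simpa using Set.eq_empty_iff_forall_notMem.mp hEhatB y ⟨hy, hxV⟩
    exact this
  have hFclU₀ : F ∩ closure U₀ = ∅ := by
    ext x; simp only [Set.mem_empty_iff_false, iff_false]
    rintro ⟨⟨hxM, hxE⟩, hxU⟩
    exact hxE (hMU₀E ⟨hxM, hxU⟩)
  -- separation of A ∪ E and B ∪ F
  have hEV₀ : closure E ∩ V₀ = ∅ := by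
    have hEV : E ∩ V₀ = ∅ := by
      rw [← Set.subset_empty_iff] at hEclV₀ ⊢
      exact fun x ⟨h1, h2⟩ => hEclV₀ ⟨h1, subset_closure h2⟩
    ext x; simp only [Set.mem_empty_iff_false, iff_false]
    rintro ⟨hx, hxV⟩
    rcases mem_closure_iff.mp hx V₀ hV₀ hxV with ⟨y, hyV, hyE⟩
    exact Set.eq_empty_iff_forall_notMem.mp hEV y ⟨hyE, hyV⟩
  have hFU₀ : closure F ∩ U₀ = ∅ := by
    have hFU : F ∩ U₀ = ∅ := by
      rw [← Set.subset_empty_iff] at hFclU₀ ⊢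
      exact fun x ⟨h1, h2⟩ => hFclU₀ ⟨h1, subset_closure h2⟩
    ext x; simp only [Set.mem_empty_iff_false, iff_false]
    rintro ⟨hx, hxU⟩
    rcases mem_closure_iff.mp hx U₀ hU₀ hxU with ⟨y, hyU, hyF⟩
    exact Set.eq_empty_iff_forall_notMem.mp hFU y ⟨hyF, hyU⟩
  have hsep1 : Disjoint (closure (A ∪ E)) (B ∪ F) := by
    rw [closure_union, hA.closure_eq]
    rw [Set.disjoint_iff_inter_eq_empty]
    ext x; simp only [Set.mem_empty_iff_false, iff_false]
    rintro ⟨hx1 | hx1, hx2 | hx2⟩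
    · exact hAB.ne_of_mem hx1 hx2 rfl
    · exact Set.eq_empty_iff_forall_notMem.mp hFclU₀ x ⟨hx2, subset_closure (hAU₀ hx1)⟩
    · exact Set.eq_empty_iff_forall_notMem.mp hEV₀ x ⟨hx1, hBV₀ hx2⟩
    · exact hx2.2 (hclEM ⟨hx1, hx2.1⟩)
  have hsep2 : Disjoint (A ∪ E) (closure (B ∪ F)) := by
    rw [closure_union, hB.closure_eq]
    rw [Set.disjoint_iff_inter_eq_empty]
    ext x; simp only [Set.mem_empty_iff_false, iff_false]
    rintro ⟨hx1 | hx1, hx2 | hx2⟩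
    · exact hAB.ne_of_mem hx1 hx2 rfl
    · exact Set.eq_empty_iff_forall_notMem.mp hFU₀ x ⟨hx2, hAU₀ hx1⟩
    · exact Set.eq_empty_iff_forall_notMem.mp hEclV₀ x ⟨hx1, subset_closure (hBV₀ hx2)⟩
    · exact (hclFM ⟨hx2, hEM hx1⟩).2 hx1
  have hsn : SeparatedNhds (A ∪ E) (B ∪ F) :=
    separatedNhds_iff_disjoint.mpr (completely_normal hsep1 hsep2)
  obtain ⟨U, V, hU, hV, hAEU, hBFV, hUV⟩ := hsn
  refine ⟨(U ∪ V)ᶜ, ⟨U, V, hU, hV, hUV, fun x hx => hAEU (Or.inl hx),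
    fun x hx => hBFV (Or.inl hx), rfl⟩, ?_⟩
  ext x; simp only [Set.mem_empty_iff_false, iff_false, Set.mem_inter_iff, Set.mem_compl_iff]
  rintro ⟨hxL, hxM⟩
  rcases hMEF hxM with h | h
  · exact hxL (Or.inl (hAEU (Or.inr h)))
  · exact hxL (Or.inr (hBFV (Or.inr h)))
end

section
/- Let (X, τ) be a hereditarily normal T1 space and let M ⊆ X be a subspace with Ind M ≤ 0, i.e., every pair of disjoint relatively closed subsets of M can be separated by a relatively clopen subset of M. Then (X, τ(M)) is a hereditarily normal T1 space with Ind (X, τ(M)) ≤ 0: every pair of disjoint τ(M)-closed subsets of X can be separated by a τ(M)-clopen set. -/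
/-! If `s`, `t` are separated in `τ(M)`, then `s ∩ M` and `t ∩ M` are separated in `τ`; adding `s`
and `t` to disjoint `τ`-neighbourhoods of these, with the closure of the other set removed, gives
disjoint `τ(M)`-neighbourhoods.

For `Ind ≤ 0`, a clopen subset `E` of `M` separating the traces of `A` and `B` is, by complete
normality of `τ`, the trace of a `τ`-open set `W` whose closure meets `M` only in `E`. Such a `W` is
`τ(M)`-clopen, and since closed subsets of `X \ M` are `τ(M)`-clopen, `W` can be corrected
off `M` to contain `A` and miss `B`. -/

open Set Topology

theorem disjoint_closure_image_val_image_val_compl {X : Type*} [TopologicalSpace X] {M : Set X}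
    {E : Set M} (hE : IsClosed E) : Disjoint (closure ((↑) '' E)) ((↑) '' Eᶜ : Set X) := by
  rintro _ hcl hcompl _ hx
  obtain ⟨y, hy, rfl⟩ := hcompl hx
  refine hy (hE.closure_eq.subset ?_)
  rw [IsEmbedding.subtypeVal.closure_eq_preimage_closure_image]
  exact hcl hx

theorem exists_isOpen_preimage_val_eq_of_isClopen {X : Type*} [TopologicalSpace X]
    [CompletelyNormalSpace X] {M : Set X} {E : Set M} (hE : IsClopen E) :
    ∃ W : Set X, IsOpen W ∧ (↑) ⁻¹' W = E ∧ closure W ∩ M ⊆ W := by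
  have hE' : Disjoint ((↑) '' E : Set X) (closure ((↑) '' Eᶜ)) := by
    simpa using (disjoint_closure_image_val_image_val_compl hE.isOpen.isClosed_compl).symm
  obtain ⟨U, V, hU, hV, hEU, hEV, hUV⟩ := separatedNhds_iff_disjoint.2
    (completely_normal (disjoint_closure_image_val_image_val_compl hE.isClosed) hE')
  have hMUV : ∀ x : M, x ∈ E ∨ (x : X) ∈ V := fun x =>
    (em (x ∈ E)).imp_right fun hx => hEV (mem_image_of_mem _ hx)
  refine ⟨U, hU, ?_, fun x ⟨hxc, hxM⟩ => ?_⟩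
  · ext x
    refine ⟨fun hxU => ?_, fun hx => hEU (mem_image_of_mem _ hx)⟩
    exact (hMUV x).resolve_right (disjoint_left.1 hUV hxU)
  · rcases hMUV ⟨x, hxM⟩ with hx | hx
    · exact hEU (mem_image_of_mem _ hx)
    · exact absurd hx (disjoint_left.1 (hUV.closure_left hV) hxc)

theorem exists_isClopen_of_isClopen_of_forall_isOpen {Y : Type*} [TopologicalSpace Y]
    {N : Set Y} (hN : ∀ K ⊆ Nᶜ, IsOpen K) {A B W : Set Y} (hA : IsClosed A) (hB : IsClosed B)
    (hAB : Disjoint A B) (hW : IsClopen W) (hAW : A ∩ N ⊆ W) (hBW : Disjoint (B ∩ N) W) :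
    ∃ U, IsClopen U ∧ A ⊆ U ∧ Disjoint U B := by
  have hAW' : IsClopen (A \ W) :=
    ⟨hA.sdiff hW.isOpen, hN _ fun x hx hxN => hx.2 (hAW ⟨hx.1, hxN⟩)⟩
  have hBW' : IsClopen (B ∩ W) :=
    ⟨hB.inter hW.isClosed, hN _ fun x hx hxN => disjoint_left.1 hBW ⟨hx.1, hxN⟩ hx.2⟩
  refine ⟨W \ (B ∩ W) ∪ A \ W, (hW.diff hBW').union hAW', fun x hx => ?_, ?_⟩
  · by_cases hxW : x ∈ W
    · exact Or.inl ⟨hxW, fun hxB => disjoint_left.1 hAB hx hxB.1⟩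
    · exact Or.inr ⟨hx, hxW⟩
  · refine disjoint_union_left.2 ⟨disjoint_left.2 fun x hx hxB => hx.2 ⟨hxB, hx.1⟩, ?_⟩
    exact hAB.mono_left sdiff_subset

namespace bingHanner

variable {X : Type*} [τ : TopologicalSpace X] {M : Set X}

theorem isOpen_iff {O : Set X} : IsOpen[bingHanner τ M] O ↔ O ∩ M ⊆ interior O := by
  constructor
  · rintro ⟨U, K, hU, hK, rfl⟩ x ⟨hx | hx, hxM⟩
    · exact interior_maximal subset_union_left hU hx
    · exact absurd hxM (hK hx)
  · intro h
    refine ⟨interior O, O \ interior O, isOpen_interior, fun x hx hxM => hx.2 (h ⟨hx.1, hxM⟩), ?_⟩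
    exact (union_sdiff_cancel interior_subset).symm

theorem isClosed_iff {C : Set X} : IsClosed[bingHanner τ M] C ↔ closure C ∩ M ⊆ C := by
  rw [← @isOpen_compl_iff X _ (bingHanner τ M), isOpen_iff, interior_compl]
  constructor
  · exact fun h x hx => by_contra fun hxC => h ⟨hxC, hx.2⟩ hx.1
  · exact fun h x hx hxc => hx.1 (h ⟨hxc, hx.2⟩)

theorem le : bingHanner τ M ≤ τ := fun _ hU => ⟨_, ∅, hU, empty_subset _, (union_empty _).symm⟩

theorem isOpen_of_subset_compl {K : Set X} (hK : K ⊆ Mᶜ) : IsOpen[bingHanner τ M] K :=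
  ⟨∅, K, isOpen_empty, hK, (empty_union K).symm⟩

theorem isOpen_union {s U : Set X} (hU : IsOpen U) (hs : s ∩ M ⊆ U) :
    IsOpen[bingHanner τ M] (s ∪ U) :=
  ⟨U, s \ U, hU, fun x hx hxM => hx.2 (hs ⟨hx.1, hxM⟩), by rw [union_comm, union_sdiff_self]⟩

theorem closure_inter_subset (s : Set X) : closure s ∩ M ⊆ closure[bingHanner τ M] s := by
  have h := isClosed_iff.1 (@isClosed_closure X (bingHanner τ M) s)
  exact fun x hx => h ⟨closure_mono (@subset_closure X (bingHanner τ M) s) hx.1, hx.2⟩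

theorem t1Space [T1Space X] : @T1Space X (bingHanner τ M) :=
  t1Space_antitone le ‹_›

theorem isOpen_union_diff_closure {s t U : Set X} (hU : IsOpen U) (hsU : s ∩ M ⊆ U)
    (hst : Disjoint s (closure[bingHanner τ M] t)) :
    IsOpen[bingHanner τ M] (s ∪ (U \ closure t)) :=
  isOpen_union (hU.sdiff isClosed_closure) fun _ hx =>
    ⟨hsU hx, fun hxt => disjoint_left.1 hst hx.1 (closure_inter_subset t ⟨hxt, hx.2⟩)⟩

theorem completelyNormalSpace [CompletelyNormalSpace X] :
    @CompletelyNormalSpace X (bingHanner τ M) := by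
  refine @CompletelyNormalSpace.mk X (bingHanner τ M) fun s t hs ht => ?_
  have hsM : Disjoint (closure (s ∩ M)) (t ∩ M) :=
    disjoint_left.2 fun x hx hxt => disjoint_left.1 hs
      (closure_inter_subset s ⟨closure_mono inter_subset_left hx, hxt.2⟩) hxt.1
  have htM : Disjoint (s ∩ M) (closure (t ∩ M)) :=
    disjoint_right.2 fun x hx hxs => disjoint_right.1 ht
      (closure_inter_subset t ⟨closure_mono inter_subset_left hx, hxs.2⟩) hxs.1
  obtain ⟨U, V, hU, hV, hsU, htV, hUV⟩ := separatedNhds_iff_disjoint.2 (completely_normal hsM htM)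
  refine (@separatedNhds_iff_disjoint X (bingHanner τ M) s t).1
    ⟨s ∪ (U \ closure t), t ∪ (V \ closure s),
      isOpen_union_diff_closure hU hsU ht,
      isOpen_union_diff_closure hV htV hs.symm,
      subset_union_left, subset_union_left, ?_⟩
  have hst : Disjoint s t := hs.mono_left (@subset_closure X (bingHanner τ M) s)
  refine disjoint_union_left.2 ⟨disjoint_union_right.2 ⟨hst, ?_⟩, disjoint_union_right.2 ⟨?_, ?_⟩⟩
  · exact disjoint_left.2 fun x hx hx' => hx'.2 (subset_closure hx)
  · exact disjoint_left.2 fun x hx hx' => hx.2 (subset_closure hx')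
  · exact hUV.mono sdiff_subset sdiff_subset

theorem t5Space [T5Space X] : @T5Space X (bingHanner τ M) :=
  @T5Space.mk X (bingHanner τ M) t1Space completelyNormalSpace

theorem isClosed_preimage_val {C : Set X} (hC : IsClosed[bingHanner τ M] C) :
    IsClosed ((↑) ⁻¹' C : Set M) := by
  have hC' : ((↑) ⁻¹' C : Set M) = (↑) ⁻¹' closure C :=
    (preimage_mono subset_closure).antisymm fun x hx => isClosed_iff.1 hC ⟨hx, x.2⟩
  rw [hC']
  exact isClosed_closure.preimage continuous_subtype_val

theorem indLE0 [CompletelyNormalSpace X]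
    (hM : IndLE0 (TopologicalSpace.induced ((↑) : M → X) τ)) : IndLE0 (bingHanner τ M) := by
  intro A B hA hB hAB
  obtain ⟨E, hEo, hEc, hAE, hEB⟩ :=
    hM _ _ (isClosed_preimage_val hA) (isClosed_preimage_val hB) (hAB.preimage _)
  obtain ⟨W, hWo, hWE, hWc⟩ := exists_isOpen_preimage_val_eq_of_isClopen ⟨hEc, hEo⟩
  have hAW : A ∩ M ⊆ W := fun x hx => by
    have hxE := hAE (show (⟨x, hx.2⟩ : M) ∈ (↑) ⁻¹' A from hx.1)
    rwa [← hWE] at hxE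
  have hBW : Disjoint (B ∩ M) W := disjoint_left.2 fun x hx hxW => by
    have hxE : (⟨x, hx.2⟩ : M) ∈ E := hWE ▸ hxW
    exact hEB.subset ⟨hxE, hx.1⟩
  obtain ⟨U, hU, hAU, hUB⟩ :=
    @exists_isClopen_of_isClopen_of_forall_isOpen X (bingHanner τ M) M
      (fun _ => isOpen_of_subset_compl) A B W hA hB hAB ⟨isClosed_iff.2 hWc, le _ hWo⟩ hAW hBW
  exact ⟨U, hU.2, hU.1, hAU, hUB.inter_eq⟩

end bingHanner

/-- If `(X, τ)` is hereditarily normal `T₁` and `M ⊆ X` satisfies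
`Ind M ≤ 0`, then `(X, τ(M))` is hereditarily normal `T₁` with `Ind (X, τ(M)) ≤ 0`. -/
theorem bingHanner_T5_and_IndZero {X : Type*} (τ : TopologicalSpace X)
    (hT5 : @T5Space X τ) (M : Set X)
    (hM : IndLE0 (TopologicalSpace.induced (Subtype.val : M → X) τ)) :
    @T5Space X (bingHanner τ M) ∧ IndLE0 (bingHanner τ M) :=
  ⟨bingHanner.t5Space, bingHanner.indLE0 hM⟩
end

section
/- Let (X, τ) be a metrizable space and let M ⊆ X be a subspace with Ind M ≤ 0, i.e., every pair of disjoint relatively closed subsets of M can be separated by a relatively clopen subset of M. Then the space (X, τ(M)) is metrizable if and only if M is a Gδ-set in (X, τ). -/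
/-!
Points outside `M` are isolated in `τ(M)`, while points of `M` keep their `τ`-neighbourhoods.
If `τ(M)` is metrizable, then `M`, being `τ(M)`-closed, is a `Gδ` for `τ(M)`, and replacing
each `τ(M)`-open set in a representation `M = ⋂ Oₙ` by its `τ`-interior loses no point of `M`.
Conversely, if `M = ⋂ Gₙ` with `Gₙ` open, put `f x = 2⁻ⁿ` for the first `n` with `x ∉ Gₙ`
(and `f = 0` on `M`). Then `f` vanishes exactly on `M` and is continuous at its points, and
`d x y + f x + f y` (for `x ≠ y`) is a metric inducing `τ(M)`.
-/

open Topology Filter Set TopologicalSpace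

section

variable {X : Type*}

theorem isOpen_bingHanner_iff {τ : TopologicalSpace X} {M s : Set X} :
    IsOpen[bingHanner τ M] s ↔ ∀ x ∈ s, x ∈ M → s ∈ @nhds X τ x := by
  let _ := τ
  constructor
  · rintro ⟨U, K, hU, hK, rfl⟩ x hx hxM
    have hxU : x ∈ U := hx.resolve_right fun h => hK h hxM
    exact mem_of_superset (IsOpen.mem_nhds hU hxU) subset_union_left
  · intro h
    refine ⟨interior s, s \ M, isOpen_interior, fun x hx => hx.2, ?_⟩
    refine Subset.antisymm (fun x hx => ?_) (union_subset interior_subset sdiff_subset)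
    by_cases hxM : x ∈ M
    · exact Or.inl (mem_interior_iff_mem_nhds.2 (h x hx hxM))
    · exact Or.inr ⟨hx, hxM⟩

theorem IsGδ.of_bingHanner {τ : TopologicalSpace X} {M S : Set X} (hSM : S ⊆ M)
    (hS : @IsGδ X (bingHanner τ M) S) : @IsGδ X τ S := by
  let _ := τ
  obtain ⟨T, hTo, hTc, rfl⟩ := hS
  have hsub : ∀ t ∈ T, ⋂₀ T ⊆ interior t := fun t ht x hx =>
    mem_interior_iff_mem_nhds.2 (isOpen_bingHanner_iff.1 (hTo t ht) x (hx t ht) (hSM hx))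
  have hT : ⋂₀ T = ⋂ t ∈ T, interior t :=
    (subset_iInter₂ hsub).antisymm
      (sInter_eq_biInter ▸ iInter₂_mono fun t _ => interior_subset)
  rw [hT]
  exact IsGδ.biInter_of_isOpen hTc fun t _ => isOpen_interior

theorem isGδ_of_metrizableSpace_bingHanner {τ : TopologicalSpace X} {M : Set X}
    (h : @MetrizableSpace X (bingHanner τ M)) : @IsGδ X τ M := by
  let _ := bingHanner τ M
  have hMc : IsClosed M := ⟨isOpen_bingHanner_iff.2 fun x hx hxM => absurd hxM hx⟩
  exact hMc.isGδ.of_bingHanner subset_rfl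

theorem IsGδ.exists_nonneg_eq_zero_iff_continuousAt [TopologicalSpace X] {M : Set X}
    (hM : IsGδ M) :
    ∃ f : X → ℝ, (∀ x, 0 ≤ f x) ∧ (∀ x, f x = 0 ↔ x ∈ M) ∧ ∀ x ∈ M, ContinuousAt f x := by
  classical
  obtain ⟨G, hGo, rfl⟩ := isGδ_iff_eq_iInter_nat.1 hM
  let f : X → ℝ := fun x => if h : ∃ n, x ∉ G n then 2⁻¹ ^ Nat.find h else 0
  have hf : ∀ x, 0 ≤ f x := fun x => by dsimp only [f]; split_ifs <;> positivity
  have hf_le : ∀ N x, (∀ k ≤ N, x ∈ G k) → f x ≤ 2⁻¹ ^ (N + 1) := by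
    intro N x hx
    dsimp only [f]
    split_ifs with h
    · exact pow_le_pow_of_le_one (by norm_num) (by norm_num)
        ((Nat.le_find_iff h _).2 fun m hm => not_not.2 (hx m (Nat.lt_succ_iff.1 hm)))
    · positivity
  have hf0 : ∀ x, f x = 0 ↔ x ∈ ⋂ n, G n := fun x => by
    simp only [f, mem_iInter]
    split_ifs with h <;> simpa using h
  refine ⟨f, hf, hf0, fun x hx => ?_⟩
  rw [ContinuousAt, (hf0 x).2 hx]
  refine tendsto_order.2 ⟨fun a ha => Eventually.of_forall fun y => ha.trans_le (hf y),
    fun a ha => ?_⟩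
  obtain ⟨N, hN⟩ := exists_pow_lt_of_lt_one ha (by norm_num : (2⁻¹ : ℝ) < 1)
  have hGN : ∀ᶠ y in 𝓝 x, ∀ k ∈ Iic N, y ∈ G k :=
    (finite_Iic N).eventually_all.2 fun k _ => (hGo k).mem_nhds (mem_iInter.1 hx k)
  filter_upwards [hGN] with y hy
  calc f y ≤ 2⁻¹ ^ (N + 1) := hf_le N y hy
    _ ≤ 2⁻¹ ^ N := pow_le_pow_of_le_one (by norm_num) (by norm_num) N.le_succ
    _ < a := hN

section weightedDist

variable [PseudoMetricSpace X] {f : X → ℝ}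

open Classical in
noncomputable def weightedDist (f : X → ℝ) (x y : X) : ℝ := if x = y then 0 else dist x y + f x + f y

@[simp]
theorem weightedDist_self (x : X) : weightedDist f x x = 0 := if_pos rfl

theorem weightedDist_of_ne {x y : X} (h : x ≠ y) : weightedDist f x y = dist x y + f x + f y :=
  if_neg h

theorem weightedDist_comm (x y : X) : weightedDist f x y = weightedDist f y x := by
  by_cases h : x = y
  · rw [h]
  · rw [weightedDist_of_ne h, weightedDist_of_ne (Ne.symm h), dist_comm]
    ring

theorem dist_le_weightedDist (hf : ∀ x, 0 ≤ f x) (x y : X) : dist x y ≤ weightedDist f x y := by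
  by_cases h : x = y
  · simp [h]
  · rw [weightedDist_of_ne h]
    linarith [hf x, hf y]

theorem le_weightedDist_of_ne (hf : ∀ x, 0 ≤ f x) {x y : X} (h : x ≠ y) :
    f x ≤ weightedDist f x y := by
  rw [weightedDist_of_ne h]
  linarith [dist_nonneg (x := x) (y := y), hf y]

theorem weightedDist_triangle (hf : ∀ x, 0 ≤ f x) (x y z : X) :
    weightedDist f x z ≤ weightedDist f x y + weightedDist f y z := by
  by_cases hxy : x = y
  · simp [hxy]
  by_cases hyz : y = z
  · simp [hyz]
  by_cases hxz : x = z
  · subst hxz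
    simp only [weightedDist_self]
    linarith [dist_nonneg.trans (dist_le_weightedDist hf x y),
      dist_nonneg.trans (dist_le_weightedDist hf y x)]
  rw [weightedDist_of_ne hxy, weightedDist_of_ne hyz, weightedDist_of_ne hxz]
  linarith [dist_triangle x y z, hf y]

theorem hasBasis_nhds_weightedDist (hf : ∀ x, 0 ≤ f x) {x : X} (hx : f x = 0)
    (hfx : ContinuousAt f x) :
    (𝓝 x).HasBasis (0 < ·) fun ε => {y | weightedDist f x y < ε} := by
  refine Metric.nhds_basis_ball.to_hasBasis
    (fun ε hε => ⟨ε, hε, fun y hy => ?_⟩) (fun ε hε => ?_)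
  · rw [Metric.mem_ball, dist_comm]
    exact (dist_le_weightedDist hf x y).trans_lt hy
  · have hfε : ∀ᶠ y in 𝓝 x, f y < ε / 2 := hfx (Iio_mem_nhds (hx ▸ half_pos hε))
    obtain ⟨δ, hδ, hδf⟩ := Metric.eventually_nhds_iff.1 hfε
    refine ⟨min δ (ε / 2), lt_min hδ (half_pos hε), fun y hy => ?_⟩
    have hyx : dist y x < min δ (ε / 2) := hy
    by_cases h : x = y
    · simp [h, hε]
    · show weightedDist f x y < ε
      rw [weightedDist_of_ne h, hx, dist_comm]
      linarith [hδf (hyx.trans_le (min_le_left _ _)), min_le_right δ (ε / 2)]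

end weightedDist

theorem metrizableSpace_bingHanner_of_isGδ [TopologicalSpace X] [MetrizableSpace X] {M : Set X}
    (hM : IsGδ M) : @MetrizableSpace X (bingHanner ‹_› M) := by
  let _ := metrizableSpaceMetric X
  obtain ⟨f, hf, hf0, hfc⟩ := hM.exists_nonneg_eq_zero_iff_continuousAt
  have hopen : ∀ s, IsOpen[bingHanner _ M] s ↔
      ∀ x ∈ s, ∃ ε > 0, ∀ y, weightedDist f x y < ε → y ∈ s := fun s => by
    rw [isOpen_bingHanner_iff]
    refine forall₂_congr fun x hxs => ?_
    by_cases hxM : x ∈ M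
    · simp only [hxM, true_imp_iff]
      exact (hasBasis_nhds_weightedDist hf ((hf0 x).2 hxM) (hfc x hxM)).mem_iff
    · have hfx : 0 < f x := (hf x).lt_of_ne fun h => hxM ((hf0 x).1 h.symm)
      refine iff_of_true (fun h => absurd h hxM) ⟨f x, hfx, fun y hy => ?_⟩
      by_cases h : x = y
      · exact h ▸ hxs
      · exact absurd (le_weightedDist_of_ne hf h) hy.not_ge
  have heq : ∀ x y, weightedDist f x y = 0 → x = y := fun x y h =>
    dist_le_zero.1 (h ▸ dist_le_weightedDist hf x y)
  let _ := @MetricSpace.ofDistTopology X (bingHanner _ M) (weightedDist f) weightedDist_self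
    weightedDist_comm (weightedDist_triangle hf) hopen heq
  infer_instance

end

theorem bingHanner_metrizable_iff_Gdelta_general {X : Type*} (τ : TopologicalSpace X)
    (hmet : @TopologicalSpace.MetrizableSpace X τ) (M : Set X) :
    @TopologicalSpace.MetrizableSpace X (bingHanner τ M) ↔ @IsGδ X τ M :=
  ⟨isGδ_of_metrizableSpace_bingHanner, @metrizableSpace_bingHanner_of_isGδ X τ hmet M⟩

/-- If `(X, τ)` is metrizable and `M ⊆ X` satisfies `Ind M ≤ 0`, then
`(X, τ(M))` is metrizable iff `M` is a `Gδ`-set in `(X, τ)`. -/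
theorem bingHanner_metrizable_iff_Gdelta {X : Type*} (τ : TopologicalSpace X)
    (hmet : @TopologicalSpace.MetrizableSpace X τ) (M : Set X)
    (hM : IndLE0 (TopologicalSpace.induced (Subtype.val : M → X) τ)) :
    @TopologicalSpace.MetrizableSpace X (bingHanner τ M) ↔ @IsGδ X τ M :=
  bingHanner_metrizable_iff_Gdelta_general τ hmet M
end

section
/- Let (X, τ) be a hereditarily normal T1 space and let M ⊆ X be a subspace with ind M ≤ 0, i.e., every point of M has a neighborhood basis in the subspace M consisting of relatively clopen subsets of M. Then (X, τ(M)) is a hereditarily normal T1 space with ind (X, τ(M)) ≤ 0: every point of X has a τ(M)-neighborhood basis consisting of τ(M)-clopen sets. -/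
/-! In `τ(M)` the points of `X \ M` are isolated while the points of `M` keep their
`τ`-neighbourhoods; a set `C` is `τ(M)`-closed iff `closure C ∩ M ⊆ C`.

If `A`, `B` are separated in `τ(M)`, then `A ∩ M` and `B ∩ M` are already separated in `τ`, so
complete normality of `τ` gives disjoint open `U ⊇ A ∩ M`, `V ⊇ B ∩ M`; then
`U \ closure B ∪ A \ M` and `V \ closure A ∪ B \ M` separate `A` and `B` in `τ(M)`.

For `x ∈ U ∩ M` with `U` open, `ind M ≤ 0` gives a relatively clopen `S ∋ x` of `M` inside
`U`. `S` and `M \ S` are separated in `τ`, so `S ⊆ G` for an open `G` whose closure misses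
`M \ S`; then `G ∩ U` is a `τ(M)`-clopen neighbourhood of `x` inside `U`. -/

open Set Topology

theorem IsClopen.separatedNhds_image_val {X : Type*} [TopologicalSpace X]
    [CompletelyNormalSpace X] {M : Set X} {S : Set M} (hS : IsClopen S) :
    SeparatedNhds (Subtype.val '' S) (Subtype.val '' Sᶜ) := by
  have hsep {T : Set M} (hT : IsClosed T) :
      Disjoint (closure (Subtype.val '' T)) (Subtype.val '' Tᶜ) := by
    refine disjoint_right.2 ?_
    rintro _ ⟨y, hyT, rfl⟩ hy
    rw [← mem_preimage, ← IsInducing.subtypeVal.closure_eq_preimage_closure_image,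
      hT.closure_eq] at hy
    exact hyT hy
  have hsep' := hsep hS.compl.1
  rw [compl_compl] at hsep'
  exact separatedNhds_iff_disjoint.2 (completely_normal (hsep hS.1) hsep'.symm)

section BingHanner

variable {X : Type*} [t : TopologicalSpace X] {M : Set X}

theorem bingHanner_le : bingHanner t M ≤ t :=
  fun U hU => ⟨U, ∅, hU, empty_subset _, (union_empty U).symm⟩

theorem isOpen_bingHanner_union {U K : Set X} (hU : IsOpen U) (hK : K ⊆ Mᶜ) :
    IsOpen[bingHanner t M] (U ∪ K) :=
  ⟨U, K, hU, hK, rfl⟩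

theorem isClosed_bingHanner_iff {C : Set X} :
    IsClosed[bingHanner t M] C ↔ closure C ∩ M ⊆ C := by
  rw [← @isOpen_compl_iff X C (bingHanner t M)]
  constructor
  · rintro ⟨U, K, (hU : IsOpen U), hK, hC⟩ z ⟨hzC, hzM⟩
    by_contra hz
    have hCU : closure C ⊆ Uᶜ :=
      closure_minimal (fun c hc hcU => (hC ▸ Or.inl hcU : c ∈ Cᶜ) hc) hU.isClosed_compl
    exact (hC ▸ hz : z ∈ U ∪ K).elim (hCU hzC) (hK · hzM)
  · intro h
    exact ⟨(closure C)ᶜ, Cᶜ \ (closure C)ᶜ, isClosed_closure.isOpen_compl,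
      fun z hz hzM => hz.1 (h ⟨not_not.1 hz.2, hzM⟩),
      (union_sdiff_cancel (compl_subset_compl.2 subset_closure)).symm⟩

theorem closure_inter_subset_closure_bingHanner (A : Set X) :
    closure A ∩ M ⊆ closure[bingHanner t M] A := fun _ ⟨hzA, hzM⟩ =>
  isClosed_bingHanner_iff.1 (@isClosed_closure X (bingHanner t M) A)
    ⟨closure_mono (@subset_closure X (bingHanner t M) A) hzA, hzM⟩

theorem t1Space_bingHanner [T1Space X] : @T1Space X (bingHanner t M) :=
  t1Space_antitone bingHanner_le ‹_›

theorem completelyNormalSpace_bingHanner [CompletelyNormalSpace X] :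
    @CompletelyNormalSpace X (bingHanner t M) := by
  refine @CompletelyNormalSpace.mk X (bingHanner t M) fun A B hAB hBA => ?_
  rw [← @separatedNhds_iff_disjoint X (bingHanner t M)]
  have hA : Disjoint (A ∩ M) (closure B) := disjoint_left.2 fun a ha haB =>
    disjoint_left.1 hBA ha.1 (closure_inter_subset_closure_bingHanner B ⟨haB, ha.2⟩)
  have hB : Disjoint (closure A) (B ∩ M) := disjoint_right.2 fun b hb hbA =>
    disjoint_left.1 hAB (closure_inter_subset_closure_bingHanner A ⟨hbA, hb.2⟩) hb.1
  obtain ⟨U, V, hU, hV, hAU, hBV, hUV⟩ : SeparatedNhds (A ∩ M) (B ∩ M) :=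
    separatedNhds_iff_disjoint.2 <| completely_normal
      (hB.mono_left (closure_mono inter_subset_left))
      (hA.mono_right (closure_mono inter_subset_left))
  refine ⟨U \ closure B ∪ A \ M, V \ closure A ∪ B \ M,
    isOpen_bingHanner_union (hU.sdiff isClosed_closure) (sdiff_subset_compl _ _),
    isOpen_bingHanner_union (hV.sdiff isClosed_closure) (sdiff_subset_compl _ _),
    fun a ha => ?_, fun b hb => ?_, ?_⟩
  · by_cases haM : a ∈ M
    · exact Or.inl ⟨hAU ⟨ha, haM⟩, disjoint_left.1 hA ⟨ha, haM⟩⟩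
    · exact Or.inr ⟨ha, haM⟩
  · by_cases hbM : b ∈ M
    · exact Or.inl ⟨hBV ⟨hb, hbM⟩, disjoint_right.1 hB ⟨hb, hbM⟩⟩
    · exact Or.inr ⟨hb, hbM⟩
  · refine disjoint_union_left.2
      ⟨disjoint_union_right.2 ⟨?_, ?_⟩, disjoint_union_right.2 ⟨?_, ?_⟩⟩
    · exact hUV.mono sdiff_subset sdiff_subset
    · exact disjoint_sdiff_left.mono_right (sdiff_subset.trans subset_closure)
    · exact disjoint_sdiff_right.mono_left (sdiff_subset.trans subset_closure)
    · exact (hBA.mono_right (@subset_closure X (bingHanner t M) B)).mono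
        sdiff_subset sdiff_subset

theorem t5Space_bingHanner [T5Space X] : @T5Space X (bingHanner t M) :=
  @T5Space.mk X (bingHanner t M) t1Space_bingHanner completelyNormalSpace_bingHanner

theorem indLE0_bingHanner [T1Space X] [CompletelyNormalSpace X]
    (hM : indLE0 (TopologicalSpace.induced (Subtype.val : M → X) t)) :
    indLE0 (bingHanner t M) := by
  rintro x _ ⟨U, K, (hU : IsOpen U), hK, rfl⟩ hxUK
  by_cases hxM : x ∈ M
  · have hxU : x ∈ U := hxUK.resolve_right (hK · hxM)
    obtain ⟨S, hSo, hSc, hxS, hSU⟩ := hM ⟨x, hxM⟩ _ (isOpen_induced hU) hxU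
    obtain ⟨G, H, hG, hH, hSG, hSH, hGH⟩ :=
      IsClopen.separatedNhds_image_val ⟨hSc, hSo⟩
    refine ⟨G ∩ U, (hG.inter hU).mono bingHanner_le, isClosed_bingHanner_iff.2 ?_,
      ⟨hSG ⟨_, hxS, rfl⟩, hxU⟩, subset_union_of_subset_left inter_subset_right _⟩
    rintro z ⟨hz, hzM⟩
    by_cases hzS : (⟨z, hzM⟩ : M) ∈ S
    · exact ⟨hSG ⟨_, hzS, rfl⟩, hSU hzS⟩
    · exact absurd (closure_mono inter_subset_left hz)
        (disjoint_right.1 (hGH.closure_left hH) (hSH ⟨_, hzS, rfl⟩))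
  · exact ⟨{x}, ⟨∅, {x}, isOpen_empty, singleton_subset_iff.2 hxM, (empty_union _).symm⟩,
      isClosed_singleton.mono bingHanner_le, rfl, singleton_subset_iff.2 hxUK⟩

end BingHanner

/-- If `(X, τ)` is hereditarily normal `T₁` and `M ⊆ X` satisfies
`ind M ≤ 0`, then `(X, τ(M))` is hereditarily normal `T₁` with `ind (X, τ(M)) ≤ 0`. -/
theorem bingHanner_T5_and_indZero {X : Type*} (τ : TopologicalSpace X)
    (hT5 : @T5Space X τ) (M : Set X)
    (hM : indLE0 (TopologicalSpace.induced (Subtype.val : M → X) τ)) :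
    @T5Space X (bingHanner τ M) ∧ indLE0 (bingHanner τ M) :=
  ⟨t5Space_bingHanner, indLE0_bingHanner hM⟩
end

section
/- Let (X, τ) be a hereditarily normal T1 space without isolated points, let k ≥ 1 be an integer, and let M_1, …, M_k be subsets of X such that each subspace M_i of (X, τ) satisfies dim M_i ≤ 0 and τ = ⋂_{i=1}^{k} τ(M_i). Then dim (X, τ) ≤ k − 1. -/
/-! Every point lies in some `M i`: otherwise `{x}` would be open in each `τ(M i)`, hence in `τ`.
Given a finite open cover, `dim M i ≤ 0` yields a refinement on `M i` by pairwise disjoint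
relatively open sets; these are separated in `X`, so hereditary normality enlarges them to
pairwise disjoint open sets of `X`. The union of the resulting `k` disjoint families refines the
cover, and by pigeonhole no `k + 1` of its members share a point. -/

open Set Function

theorem exists_isOpen_pairwise_disjoint_of_separated {X ι : Type*} [TopologicalSpace X]
    [CompletelyNormalSpace X] [Finite ι] (E : ι → Set X)
    (hsep : Pairwise fun s t => Disjoint (closure (E s)) (E t)) :
    ∃ G : ι → Set X, (∀ s, IsOpen (G s)) ∧ (∀ s, E s ⊆ G s) ∧
      Pairwise (Disjoint on G) := by
  have hsep_rest : ∀ s, SeparatedNhds (E s) (⋃ t ∈ ({s}ᶜ : Set ι), E t) := fun s => by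
    refine separatedNhds_iff_disjoint.mpr (CompletelyNormalSpace.completely_normal ?_ ?_)
    · exact disjoint_iUnion₂_right.mpr fun t ht => hsep (Ne.symm ht)
    · rw [(toFinite _).closure_biUnion]
      exact disjoint_iUnion₂_right.mpr fun t ht => (hsep ht).symm
  choose U V hU hV hEU hEV hUV using hsep_rest
  -- `G s` lies in `U s`, and for `t ≠ s` also in `V t`, which is disjoint from `U t`.
  refine ⟨fun s => U s ∩ ⋂ t ∈ ({s}ᶜ : Set ι), V t, fun s => (hU s).inter ?_,
    fun s => ?_, ?_⟩
  · exact (toFinite _).isOpen_biInter fun t _ => hV t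
  · refine subset_inter (hEU s) (subset_iInter₂ fun t ht => ?_)
    exact (subset_biUnion_of_mem (u := E) (Ne.symm ht)).trans (hEV t)
  · intro s t hst
    refine (hUV s).mono inter_subset_left (inter_subset_right.trans ?_)
    exact biInter_subset_of_mem hst

theorem Disjoint.closure_image_val {X : Type*} [TopologicalSpace X] {M : Set X} {s t : Set M}
    (hst : Disjoint s t) (ht : IsOpen t) :
    Disjoint (closure (Subtype.val '' s)) (Subtype.val '' t) := by
  obtain ⟨H, hH, rfl⟩ := isOpen_induced_iff.mp ht
  exact (disjoint_image_left.mpr hst).closure_left hH |>.mono_right (image_preimage_subset _ _)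

theorem exists_pairwiseDisjoint_refinement_of_covDimLE_zero {Z : Type*}
    {t : TopologicalSpace Z} (h : covDimLE t 0) {C : Set (Set Z)} (hC : C.Finite)
    (hCo : ∀ U ∈ C, t.IsOpen U) (hCcov : ⋃₀ C = univ) :
    ∃ V : Set (Set Z), V.Finite ∧ (∀ U ∈ V, t.IsOpen U) ∧ ⋃₀ V = univ ∧
      (∀ U ∈ V, ∃ W ∈ C, U ⊆ W) ∧ V.PairwiseDisjoint id := by
  classical
  obtain ⟨V, hVfin, hVo, hVcov, hVref, hVord⟩ := h C hC hCo hCcov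
  refine ⟨V, hVfin, hVo, hVcov, hVref, fun A hA B hB hAB => ?_⟩
  have hpair : ⋂₀ (({A, B} : Finset (Set Z)) : Set (Set Z)) = ∅ :=
    hVord {A, B} (by simp [insert_subset_iff, hA, hB]) (Finset.card_pair hAB)
  simpa [disjoint_iff_inter_eq_empty] using hpair

theorem exists_pairwiseDisjoint_open_refinement_of_subspace_covDimLE_zero {X : Type*}
    [TopologicalSpace X] [CompletelyNormalSpace X] {M : Set X}
    (hM : covDimLE (TopologicalSpace.induced (Subtype.val : M → X) ‹_›) 0)
    {C : Set (Set X)} (hC : C.Finite) (hCo : ∀ O ∈ C, IsOpen O) (hMC : M ⊆ ⋃₀ C) :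
    ∃ W : Set (Set X), W.Finite ∧ (∀ A ∈ W, IsOpen A) ∧ W.PairwiseDisjoint id ∧
      M ⊆ ⋃₀ W ∧ ∀ A ∈ W, ∃ O ∈ C, A ⊆ O := by
  obtain ⟨V, hVfin, hVo, hVcov, hVref, hVdisj⟩ :=
    exists_pairwiseDisjoint_refinement_of_covDimLE_zero hM (hC.image (Subtype.val ⁻¹' ·))
      (by rintro _ ⟨O, hO, rfl⟩; exact ⟨O, hCo O hO, rfl⟩)
      (eq_univ_of_forall fun x => by
        obtain ⟨O, hO, hxO⟩ := hMC x.2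
        exact ⟨_, ⟨O, hO, rfl⟩, hxO⟩)
  have : Finite V := hVfin.to_subtype
  -- Disjoint open pieces of `M` are separated in `X`, so hereditary normality thickens them.
  obtain ⟨G, hGo, hGsub, hGdisj⟩ :=
    exists_isOpen_pairwise_disjoint_of_separated (fun v : V => Subtype.val '' (v : Set M))
      fun v w hvw => (hVdisj v.2 w.2 (Subtype.coe_ne_coe.mpr hvw)).closure_image_val (hVo w w.2)
  have hchoice : ∀ v : V, ∃ O ∈ C, (v : Set M) ⊆ Subtype.val ⁻¹' O := fun v => by
    obtain ⟨_, ⟨O, hO, rfl⟩, hvO⟩ := hVref v v.2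
    exact ⟨O, hO, hvO⟩
  choose c hcC hc using hchoice
  refine ⟨range fun v => G v ∩ c v, finite_range _, ?_, ?_, ?_, ?_⟩
  · rintro _ ⟨v, rfl⟩
    exact (hGo v).inter (hCo _ (hcC v))
  · exact Pairwise.range_pairwise fun v w hvw =>
      (hGdisj hvw).mono inter_subset_left inter_subset_left
  · intro x hx
    obtain ⟨v, hv, hxv⟩ : (⟨x, hx⟩ : M) ∈ ⋃₀ V := hVcov ▸ mem_univ _
    exact ⟨_, ⟨⟨v, hv⟩, rfl⟩, hGsub _ ⟨_, hxv, rfl⟩, hc ⟨v, hv⟩ hxv⟩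
  · rintro _ ⟨v, rfl⟩
    exact ⟨c v, hcC v, inter_subset_right⟩

theorem sInter_eq_empty_of_card_lt {X ι : Type*} [Fintype ι] {W : ι → Set (Set X)}
    (hW : ∀ i, (W i).PairwiseDisjoint id) {F : Finset (Set X)} (hF : ↑F ⊆ ⋃ i, W i)
    (hcard : Fintype.card ι < F.card) : ⋂₀ (F : Set (Set X)) = ∅ := by
  refine eq_empty_of_forall_notMem fun x hx => ?_
  choose g hg using fun A : F => mem_iUnion.mp (hF A.2)
  obtain ⟨A, B, hAB, hgAB⟩ := Fintype.exists_ne_map_eq_of_card_lt g (by simpa using hcard)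
  exact disjoint_left.mp (hW (g A) (hg A) (hgAB ▸ hg B) (Subtype.coe_ne_coe.mpr hAB))
    (hx A A.2) (hx B B.2)

theorem covDimLE_of_iUnion_eq_univ {X ι : Type*} [TopologicalSpace X] [CompletelyNormalSpace X]
    [Fintype ι] (M : ι → Set X) (hcov : ⋃ i, M i = univ)
    (hdim : ∀ i, covDimLE (TopologicalSpace.induced (Subtype.val : M i → X) ‹_›) 0)
    {n : ℕ} (hn : Fintype.card ι < n + 2) : covDimLE ‹_› n := by
  intro C hC hCo hCcov
  choose W hWfin hWo hWdisj hWcov hWref using fun i =>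
    exists_pairwiseDisjoint_open_refinement_of_subspace_covDimLE_zero (hdim i) hC hCo
      (hCcov ▸ subset_univ _)
  refine ⟨⋃ i, W i, finite_iUnion hWfin, ?_, ?_, ?_,
    fun F hF hFcard => sInter_eq_empty_of_card_lt hWdisj hF (hFcard ▸ hn)⟩
  · exact fun A hA => (mem_iUnion.mp hA).elim fun i hi => hWo i A hi
  · refine eq_univ_of_forall fun x => ?_
    obtain ⟨i, hi⟩ := mem_iUnion.mp (hcov ▸ mem_univ x)
    obtain ⟨A, hA, hxA⟩ := hWcov i hi
    exact ⟨A, mem_iUnion.mpr ⟨i, hA⟩, hxA⟩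
  · exact fun A hA => (mem_iUnion.mp hA).elim fun i hi => hWref i A hi

theorem bingHanner_isOpen_singleton {X : Type*} (τ : TopologicalSpace X) {M : Set X} {x : X}
    (hx : x ∉ M) : (bingHanner τ M).IsOpen {x} :=
  ⟨∅, {x}, @isOpen_empty X τ, singleton_subset_iff.mpr hx, (empty_union _).symm⟩

theorem dim_le_of_bingHanner_intersection_general {X : Type*} (τ : TopologicalSpace X)
    (hT5 : @T5Space X τ) (hnoiso : ∀ x : X, ¬ τ.IsOpen {x})
    (k : ℕ) (M : Fin k → Set X)
    (hdim : ∀ i, covDimLE (TopologicalSpace.induced (Subtype.val : (M i) → X) τ) 0)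
    (hint : ∀ O : Set X, τ.IsOpen O ↔ ∀ i, (bingHanner τ (M i)).IsOpen O) :
    covDimLE τ (k - 1) := by
  let := τ
  have := hT5
  have hcov : ⋃ i, M i = univ := eq_univ_of_forall fun x => by
    by_contra hx
    exact hnoiso x ((hint {x}).mpr fun i =>
      bingHanner_isOpen_singleton τ fun hxi => hx (mem_iUnion.mpr ⟨i, hxi⟩))
  exact covDimLE_of_iUnion_eq_univ M hcov hdim (by rw [Fintype.card_fin]; omega)

/-- If `(X, τ)` is hereditarily normal `T₁` without isolated points,
`k ≥ 1`, each subspace `M_i` has `dim M_i ≤ 0`, and `τ = ⋂_{i=1}^{k} τ(M_i)`, then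
`dim (X, τ) ≤ k - 1`. -/
theorem dim_le_of_bingHanner_intersection {X : Type*} (τ : TopologicalSpace X)
    (hT5 : @T5Space X τ) (hnoiso : ∀ x : X, ¬ τ.IsOpen {x})
    (k : ℕ) (hk : 1 ≤ k) (M : Fin k → Set X)
    (hdim : ∀ i, covDimLE (TopologicalSpace.induced (Subtype.val : (M i) → X) τ) 0)
    (hint : ∀ O : Set X, τ.IsOpen O ↔ ∀ i, (bingHanner τ (M i)).IsOpen O) :
    covDimLE τ (k - 1) :=
  dim_le_of_bingHanner_intersection_general τ hT5 hnoiso k M hdim hint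
end
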